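/- Let D > 0 and 0 < α < β < 1, and define G₁ : ℂ × (0,∞) → ℂ by G₁(z, w) = ∫₀^{w/2} ₁F₁(−α; 1−β; zt/D) e^{−t} t^{−β} dt. Then for every z ∈ ℂ and every w > 0, G₁ satisfies the differential equation −2 ∂²G₁/∂w∂z (z,w) − (1 − z/D) ∂G₁/∂z (z,w) = (α/D) G₁(z, w), where ∂/∂z denotes the complex derivative in the first variable and ∂/∂w the derivative in the second (real) variable. -/

import Mathlib

/-- The Pochhammer symbol `(q)_k = q(q+1)⋯(q+k−1)` in `ℂ`. -/
noncomputable def cpoch (q : ℂ) (k : ℕ) : ℂ := ∏ i ∈ Finset.range k, (q + i)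

/-- The confluent hypergeometric series `₁F₁(a;c;x) = ∑_k (a)_k / ((c)_k k!) x^k`. -/
noncomputable def chyp1F1 (a c x : ℂ) : ℂ :=
  ∑' k : ℕ, cpoch a k / (cpoch c k * (k.factorial : ℂ)) * x ^ k

/-- `G₁(z,w) = ∫₀^{w/2} ₁F₁(−α;1−β;zt/D) e^{−t} t^{−β} dt`. -/
noncomputable def G1 (D α β : ℝ) (z : ℂ) (w : ℝ) : ℂ :=
  ∫ t in (0:ℝ)..(w / 2),
    chyp1F1 (-(α : ℂ)) ((1 - β : ℝ) : ℂ) (z * (t : ℂ) / (D : ℂ)) *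
      (Real.exp (-t) : ℂ) * ((t ^ (-β) : ℝ) : ℂ)

/-!
Write `F = ₁F₁(-α; 1-β; ·)` and `x = z t / D`. Differentiating under the integral sign,
`∂G₁/∂z = ∫₀^{w/2} F'(x) (t/D) e^{-t} t^{-β} dt`, hence `∂²G₁/∂w∂z = H(w/2) / (2D)` with
`H(t) = F'(x) e^{-t} t^{1-β}`. Kummer's equation `x F'' + (1 - β - x) F' = -α F` gives
`H'(t) = (-α F(x) + (z - D) (t/D) F'(x)) e^{-t} t^{-β}`, and since `H(0) = 0` integrating over
`[0, w/2]` yields `H(w/2) = -α G₁ + (z - D) ∂G₁/∂z`, which is the equation.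
The coefficients of `₁F₁` decay like `C^k / k!`, which makes termwise differentiation legitimate.
-/

open MeasureTheory intervalIntegral Set

noncomputable def seriesSum (B : ℕ → ℂ) (x : ℂ) : ℂ := ∑' k, B k * x ^ k

def derivCoeff (B : ℕ → ℂ) (k : ℕ) : ℂ := ((k : ℂ) + 1) * B (k + 1)

def FactorialDecay (B : ℕ → ℂ) (C : ℝ) : Prop :=
  ∀ k : ℕ, ((k : ℝ) + 1) * ‖B (k + 1)‖ ≤ C * ‖B k‖

theorem norm_derivCoeff (B : ℕ → ℂ) (k : ℕ) :
    ‖derivCoeff B k‖ = ((k : ℝ) + 1) * ‖B (k + 1)‖ := by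
  rw [derivCoeff, norm_mul, ← Nat.cast_add_one, Complex.norm_natCast, Nat.cast_add_one]

theorem hasSum_natCast_mul_pow {B : ℕ → ℂ} {x : ℂ}
    (h : Summable fun k => derivCoeff B k * x ^ k) :
    HasSum (fun k => k * B k * x ^ k) (x * seriesSum (derivCoeff B) x) := by
  refine (hasSum_nat_add_iff' 1).mp ?_
  have hterm : ∀ k : ℕ,
      x * (derivCoeff B k * x ^ k) = ((k + 1 : ℕ) : ℂ) * B (k + 1) * x ^ (k + 1) :=
    fun k => by simp only [derivCoeff]; push_cast; ring
  simpa [seriesSum, hterm] using h.hasSum.mul_left x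

namespace FactorialDecay

variable {B : ℕ → ℂ} {C : ℝ}

theorem deriv (h : FactorialDecay B C) : FactorialDecay (derivCoeff B) C := by
  intro k
  rw [norm_derivCoeff, norm_derivCoeff]
  have := mul_le_mul_of_nonneg_left (h (k + 1)) (by positivity : (0 : ℝ) ≤ k + 1)
  push_cast at this ⊢
  linarith

theorem norm_le (h : FactorialDecay B C) (k : ℕ) : ‖B k‖ ≤ ‖B 0‖ * |C| ^ k / k.factorial := by
  induction k with
  | zero => simp
  | succ k ih =>
    have hstep : ((k : ℝ) + 1) * ‖B (k + 1)‖ ≤ |C| * ‖B k‖ :=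
      (h k).trans (mul_le_mul_of_nonneg_right (le_abs_self C) (norm_nonneg _))
    rw [le_div_iff₀ (by positivity), Nat.factorial_succ, Nat.cast_mul, pow_succ]
    calc ‖B (k + 1)‖ * (((k + 1 : ℕ) : ℝ) * k.factorial)
        = ((k : ℝ) + 1) * ‖B (k + 1)‖ * k.factorial := by push_cast; ring
      _ ≤ |C| * ‖B k‖ * k.factorial := by gcongr
      _ ≤ |C| * (‖B 0‖ * |C| ^ k / k.factorial) * k.factorial := by gcongr
      _ = ‖B 0‖ * (|C| ^ k * |C|) := by field_simp

theorem summable_norm (h : FactorialDecay B C) (x : ℂ) : Summable fun k => ‖B k * x ^ k‖ := by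
  refine .of_nonneg_of_le (fun _ => norm_nonneg _) (fun k => ?_)
    ((Real.summable_pow_div_factorial (|C| * ‖x‖)).mul_left ‖B 0‖)
  rw [norm_mul, norm_pow, mul_pow, ← mul_div_assoc, ← mul_assoc, mul_div_right_comm]
  gcongr
  exact h.norm_le k

theorem summable (h : FactorialDecay B C) (x : ℂ) : Summable fun k => B k * x ^ k :=
  (h.summable_norm x).of_norm

theorem hasSum_derivCoeff (h : FactorialDecay B C) (x : ℂ) :
    HasSum (fun k => B k * (k * x ^ (k - 1))) (seriesSum (derivCoeff B) x) := by
  refine (hasSum_nat_add_iff' 1).mp ?_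
  have hterm : ∀ k : ℕ,
      derivCoeff B k * x ^ k = B (k + 1) * (((k + 1 : ℕ) : ℂ) * x ^ (k + 1 - 1)) :=
    fun k => by simp only [derivCoeff, Nat.add_sub_cancel]; push_cast; ring
  simpa [seriesSum, hterm] using (h.deriv.summable x).hasSum

theorem hasDerivAt_seriesSum (h : FactorialDecay B C) (x : ℂ) :
    HasDerivAt (seriesSum B) (seriesSum (derivCoeff B) x) x := by
  set R : ℝ := ‖x‖ + 1
  have hbound : Summable fun k => ‖B k‖ * (k * R ^ (k - 1)) := by
    have := (h.hasSum_derivCoeff (R : ℂ)).summable.norm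
    convert this using 2 with k
    simp [norm_pow, Complex.norm_real, abs_of_pos (by positivity : 0 < R)]
  rw [← (h.hasSum_derivCoeff x).tsum_eq]
  refine hasDerivAt_tsum_of_isPreconnected hbound Metric.isOpen_ball
    (convex_ball (0 : ℂ) R).isPreconnected (fun k y _ => (hasDerivAt_pow k y).const_mul (B k))
    (fun k y hy => ?_) (Metric.mem_ball_self (by positivity)) (h.summable 0) (by simp [R])
  rw [mem_ball_zero_iff] at hy
  rw [norm_mul, norm_mul, norm_pow, Complex.norm_natCast]
  gcongr

theorem seriesSum_kummer_ode {a c : ℂ} (h : FactorialDecay B C)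
    (hrec : ∀ k : ℕ, ((k : ℂ) + 1) * (c + k) * B (k + 1) = (a + k) * B k) (x : ℂ) :
    x * seriesSum (derivCoeff (derivCoeff B)) x + (c - x) * seriesSum (derivCoeff B) x
      = a * seriesSum B x := by
  have hsum := ((hasSum_natCast_mul_pow (h.deriv.deriv.summable x)).add
    ((h.deriv.summable x).hasSum.mul_left c)).sub
    (hasSum_natCast_mul_pow (h.deriv.summable x))
  have hterm : ∀ k : ℕ, (k * derivCoeff B k * x ^ k + c * (derivCoeff B k * x ^ k))
      - k * B k * x ^ k = a * (B k * x ^ k) := fun k => by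
    simp only [derivCoeff]
    linear_combination x ^ k * hrec k
  simp only [hterm] at hsum
  have := hsum.unique ((h.summable x).hasSum.mul_left a)
  unfold seriesSum at this ⊢
  linear_combination this

end FactorialDecay

noncomputable def kummerCoeff (a c : ℂ) (k : ℕ) : ℂ := cpoch a k / (cpoch c k * k.factorial)

theorem cpoch_ne_zero {c : ℂ} (hc : ∀ k : ℕ, c + k ≠ 0) (k : ℕ) : cpoch c k ≠ 0 :=
  Finset.prod_ne_zero_iff.mpr fun i _ => hc i

theorem kummerCoeff_succ (a : ℂ) {c : ℂ} (hc : ∀ k : ℕ, c + k ≠ 0) (k : ℕ) :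
    ((k : ℂ) + 1) * (c + k) * kummerCoeff a c (k + 1) = (a + k) * kummerCoeff a c k := by
  have := cpoch_ne_zero hc k
  have := hc k
  simp only [kummerCoeff, cpoch, Finset.prod_range_succ, Nat.factorial_succ] at *
  push_cast
  field_simp

theorem ofReal_add_natCast_ne_zero {c : ℝ} (hc : 0 < c) (k : ℕ) : (c : ℂ) + k ≠ 0 := by
  exact_mod_cast (by positivity : c + k ≠ 0)

theorem factorialDecay_kummerCoeff (a : ℂ) {c : ℝ} (hc : 0 < c) :
    FactorialDecay (kummerCoeff a c) (‖a‖ / c + 1) := by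
  intro k
  have hck : 0 < c + k := by positivity
  have hrec := congrArg norm (kummerCoeff_succ a (ofReal_add_natCast_ne_zero hc) k)
  have hnorm : ‖(c : ℂ) + k‖ = c + k := by
    rw [← Complex.ofReal_natCast, ← Complex.ofReal_add, Complex.norm_of_nonneg hck.le]
  have hk : ‖(k : ℂ) + 1‖ = k + 1 := by exact_mod_cast Complex.norm_natCast (k + 1)
  have ha : ‖a + k‖ ≤ (‖a‖ / c + 1) * (c + k) := by
    have : ‖a‖ ≤ ‖a‖ / c * (c + k) := by
      rw [div_mul_eq_mul_div, le_div_iff₀ hc]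
      nlinarith [norm_nonneg a, k.cast_nonneg (α := ℝ)]
    calc ‖a + k‖ ≤ ‖a‖ + k := by simpa using norm_add_le a k
      _ ≤ (‖a‖ / c + 1) * (c + k) := by linarith
  rw [norm_mul, norm_mul, norm_mul, hk, hnorm] at hrec
  refine le_of_mul_le_mul_right ?_ hck
  calc (k + 1) * ‖kummerCoeff a c (k + 1)‖ * (c + k) = ‖a + k‖ * ‖kummerCoeff a c k‖ := by
        rw [← hrec]; ring
    _ ≤ (‖a‖ / c + 1) * (c + k) * ‖kummerCoeff a c k‖ := by gcongr
    _ = (‖a‖ / c + 1) * ‖kummerCoeff a c k‖ * (c + k) := by ring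

theorem intervalIntegrable_ofReal_rpow {γ : ℝ} (hγ : -1 < γ) (a b : ℝ) :
    IntervalIntegrable (fun t : ℝ => ((t ^ γ : ℝ) : ℂ)) volume a b :=
  ⟨(intervalIntegrable_rpow' hγ).1.ofReal, (intervalIntegrable_rpow' hγ).2.ofReal⟩

theorem intervalIntegrable_mul_rpow {g : ℝ → ℂ} (hg : Continuous g) {γ : ℝ} (hγ : -1 < γ)
    (a b : ℝ) : IntervalIntegrable (fun t => g t * ((t ^ γ : ℝ) : ℂ)) volume a b :=
  (intervalIntegrable_ofReal_rpow hγ a b).continuousOn_mul hg.continuousOn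

theorem hasDerivAt_integral_mul_rpow {F F' : ℂ → ℝ → ℂ} (hF : ∀ x, Continuous (F x))
    (hF' : Continuous (Function.uncurry F')) (hderiv : ∀ x t, HasDerivAt (F · t) (F' x t) x)
    {γ : ℝ} (hγ : -1 < γ) (b : ℝ) (x₀ : ℂ) :
    HasDerivAt (fun x => ∫ t in (0 : ℝ)..b, F x t * ((t ^ γ : ℝ) : ℂ))
      (∫ t in (0 : ℝ)..b, F' x₀ t * ((t ^ γ : ℝ) : ℂ)) x₀ := by
  obtain ⟨K, hK⟩ := ((isCompact_closedBall x₀ 1).prod (isCompact_uIcc (a := 0) (b := b))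
    ).exists_bound_of_continuousOn hF'.continuousOn
  refine (intervalIntegral.hasDerivAt_integral_of_dominated_loc_of_deriv_le
    (bound := fun t => K * ‖((t ^ γ : ℝ) : ℂ)‖) (Metric.closedBall_mem_nhds x₀ one_pos)
    (.of_forall fun x => (intervalIntegrable_mul_rpow (hF x) hγ 0 b).def'.aestronglyMeasurable)
    (intervalIntegrable_mul_rpow (hF x₀) hγ 0 b)
    (intervalIntegrable_mul_rpow (hF'.comp (Continuous.prodMk_right x₀)) hγ 0 b
      ).def'.aestronglyMeasurable
    (.of_forall fun t ht x hx => ?_) ((intervalIntegrable_ofReal_rpow hγ 0 b).norm.const_mul K)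
    (.of_forall fun t _ x _ => (hderiv x t).mul_const _)).2
  rw [norm_mul]
  gcongr
  exact hK (x, t) ⟨hx, uIoc_subset_uIcc ht⟩

theorem hasDerivAt_integral_mul_rpow_right {g : ℝ → ℂ} (hg : Continuous g) {γ b : ℝ}
    (hγ : -1 < γ) (hb : b ≠ 0) :
    HasDerivAt (fun u => ∫ t in (0 : ℝ)..u, g t * ((t ^ γ : ℝ) : ℂ))
      (g b * ((b ^ γ : ℝ) : ℂ)) b :=
  integral_hasDerivAt_right (intervalIntegrable_mul_rpow hg hγ 0 b)
    (by fun_prop : Measurable fun t : ℝ => g t * ((t ^ γ : ℝ) : ℂ)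
      ).aestronglyMeasurable.stronglyMeasurableAtFilter
    (hg.continuousAt.mul (Complex.continuous_ofReal.continuousAt.comp
      (Real.continuousAt_rpow_const b γ (Or.inl hb))))

section KummerIntegral

variable {f f' f'' : ℂ → ℂ} {a : ℂ} {D β : ℝ}

theorem integral_eq_of_kummer_ode (hf : Continuous f) (hf' : ∀ x, HasDerivAt f' (f'' x) x)
    (hode : ∀ x, x * f'' x + (((1 - β : ℝ) : ℂ) - x) * f' x = a * f x) (hD : D ≠ 0)
    (hβ : β < 1) (z : ℂ) {b : ℝ} (hb : 0 < b) :
    a * (∫ t in (0 : ℝ)..b, f (z * t / D) * (Real.exp (-t) : ℂ) * ((t ^ (-β) : ℝ) : ℂ))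
        + (z - D) * ∫ t in (0 : ℝ)..b,
          f' (z * t / D) * (t / D) * (Real.exp (-t) : ℂ) * ((t ^ (-β) : ℝ) : ℂ)
      = D * (f' (z * b / D) * (b / D) * (Real.exp (-b) : ℂ) * ((b ^ (-β) : ℝ) : ℂ)) := by
  have hf'c : Continuous f' := continuous_iff_continuousAt.2 fun x => (hf' x).continuousAt
  have hDc : (D : ℂ) ≠ 0 := Complex.ofReal_ne_zero.2 hD
  have hrpow_sub : ∀ t : ℝ, 0 < t → t ^ (1 - β) = t * t ^ (-β) := fun t ht => by
    rw [sub_eq_add_neg, Real.rpow_add ht, Real.rpow_one]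
  set H : ℝ → ℂ := fun t => f' (z * t / D) * (Real.exp (-t) : ℂ) * ((t ^ (1 - β) : ℝ) : ℂ)
  have hH : Continuous H := by
    have : Continuous fun t : ℝ => t ^ (1 - β) := Real.continuous_rpow_const (by linarith)
    fun_prop
  have hderiv : ∀ t ∈ Ioo 0 b, HasDerivAt H
      (a * (f (z * t / D) * (Real.exp (-t) : ℂ) * ((t ^ (-β) : ℝ) : ℂ))
        + (z - D) * (f' (z * t / D) * (t / D) * (Real.exp (-t) : ℂ) * ((t ^ (-β) : ℝ) : ℂ)))
      t := by
    intro t ht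
    have hx : HasDerivAt (fun s : ℝ => f' (z * s / D)) (f'' (z * t / D) * (z / D)) t := by
      have := ((hasDerivAt_id (t : ℂ)).const_mul z).div_const (D : ℂ)
      simp only [id, mul_one] at this
      exact ((hf' _).comp (t : ℂ) this).comp_ofReal
    have hexp : HasDerivAt (fun s : ℝ => (Real.exp (-s) : ℂ)) (-Real.exp (-t) : ℝ) t :=
      ((Real.hasDerivAt_exp (-t)).comp t (hasDerivAt_neg t)).ofReal_comp.congr_deriv (by simp)
    have hpow : HasDerivAt (fun s : ℝ => ((s ^ (1 - β) : ℝ) : ℂ))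
        ((1 - β) * t ^ (1 - β - 1) : ℝ) t :=
      (Real.hasDerivAt_rpow_const (Or.inl ht.1.ne')).ofReal_comp
    refine ((hx.mul hexp).mul hpow).congr_deriv ?_
    rw [sub_sub_cancel_left, hrpow_sub t ht.1, Pi.mul_apply]
    have := hode (z * t / D)
    push_cast at this ⊢
    field_simp at this ⊢
    linear_combination ((t ^ (-β) : ℝ) : ℂ) * this
  have hint0 := (intervalIntegrable_mul_rpow (by fun_prop : Continuous fun t : ℝ =>
    f (z * t / D) * (Real.exp (-t) : ℂ)) (γ := -β) (by linarith) 0 b).const_mul a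
  have hint1 := (intervalIntegrable_mul_rpow (by fun_prop : Continuous fun t : ℝ =>
    f' (z * t / D) * (t / D) * (Real.exp (-t) : ℂ)) (γ := -β) (by linarith) 0 b
    ).const_mul (z - D)
  rw [← intervalIntegral.integral_const_mul, ← intervalIntegral.integral_const_mul,
    ← integral_add hint0 hint1, integral_eq_sub_of_hasDerivAt_of_tendsto hb hderiv (hint0.add hint1)
    ((hH.tendsto 0).mono_left nhdsWithin_le_nhds) ((hH.tendsto b).mono_left nhdsWithin_le_nhds)]
  simp only [H, hrpow_sub b hb, Real.zero_rpow (by linarith : 1 - β ≠ 0)]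
  push_cast
  field_simp
  ring

noncomputable def weightedIntegral (f : ℂ → ℂ) (D β : ℝ) (z : ℂ) (w : ℝ) : ℂ :=
  ∫ t in (0 : ℝ)..(w / 2), f (z * (t : ℂ) / (D : ℂ)) * (Real.exp (-t) : ℂ) * ((t ^ (-β) : ℝ) : ℂ)

theorem weightedIntegral_eigenvalue_equation (hf : ∀ x, HasDerivAt f (f' x) x)
    (hf' : ∀ x, HasDerivAt f' (f'' x) x)
    (hode : ∀ x, x * f'' x + (((1 - β : ℝ) : ℂ) - x) * f' x = a * f x) (hD : D ≠ 0)
    (hβ : β < 1) (z : ℂ) {w : ℝ} (hw : 0 < w) :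
    -2 * deriv (fun w' : ℝ => deriv (fun z' : ℂ => weightedIntegral f D β z' w') z) w
        - (1 - z / D) * deriv (fun z' : ℂ => weightedIntegral f D β z' w) z
      = -(a / D) * weightedIntegral f D β z w := by
  have hfc : Continuous f := continuous_iff_continuousAt.2 fun x => (hf x).continuousAt
  have hf'c : Continuous f' := continuous_iff_continuousAt.2 fun x => (hf' x).continuousAt
  set g : ℝ → ℂ := fun t => f' (z * t / D) * (t / D) * (Real.exp (-t) : ℂ)
  have hz : (fun w' : ℝ => deriv (fun z' : ℂ => weightedIntegral f D β z' w') z)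
      = fun w' => ∫ t in (0 : ℝ)..(w' / 2), g t * ((t ^ (-β) : ℝ) : ℂ) := funext fun w' =>
    (hasDerivAt_integral_mul_rpow (F := fun x t => f (x * t / D) * (Real.exp (-t) : ℂ))
      (fun x => by fun_prop) (by fun_prop)
      (fun x t => ((hf _).comp x ((hasDerivAt_mul_const (t : ℂ)).div_const (D : ℂ))).mul_const _)
      (by linarith) (w' / 2) z).deriv
  have hw' : HasDerivAt (fun w' : ℝ => ∫ t in (0 : ℝ)..(w' / 2), g t * ((t ^ (-β) : ℝ) : ℂ))
      ((1 / 2 : ℝ) • (g (w / 2) * (((w / 2) ^ (-β) : ℝ) : ℂ))) w :=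
    (hasDerivAt_integral_mul_rpow_right (by fun_prop) (by linarith) (by positivity)).scomp w
      ((hasDerivAt_id w).div_const 2)
  have hFTC : (D : ℂ) * (g (w / 2) * (((w / 2) ^ (-β) : ℝ) : ℂ))
      = a * weightedIntegral f D β z w
        + (z - D) * ∫ t in (0 : ℝ)..(w / 2), g t * ((t ^ (-β) : ℝ) : ℂ) :=
    (integral_eq_of_kummer_ode hfc hf' hode hD hβ z (half_pos hw)).symm
  have hDc : (D : ℂ) ≠ 0 := Complex.ofReal_ne_zero.2 hD
  rw [hz, hw'.deriv, Complex.real_smul,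
    show deriv (fun z' : ℂ => weightedIntegral f D β z' w) z = _ from congrFun hz w]
  generalize g (w / 2) * (((w / 2) ^ (-β) : ℝ) : ℂ) = X at hFTC ⊢
  push_cast
  field_simp
  linear_combination -hFTC

end KummerIntegral

theorem G1_eigenvalue_equation_general (D α β : ℝ) (hD : 0 < D)
    (hβ : β < 1) (z : ℂ) (w : ℝ) (hw : 0 < w) :
    -2 * deriv (fun w' : ℝ => deriv (fun z' : ℂ => G1 D α β z' w') z) w
        - (1 - z / (D : ℂ)) * deriv (fun z' : ℂ => G1 D α β z' w) z
      = ((α / D : ℝ) : ℂ) * G1 D α β z w := by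
  have hc : 0 < 1 - β := sub_pos.2 hβ
  have hA := factorialDecay_kummerCoeff (-(α : ℂ)) hc
  have hode := hA.seriesSum_kummer_ode (kummerCoeff_succ _ (ofReal_add_natCast_ne_zero hc))
  rw [show ((α / D : ℝ) : ℂ) = -(-(α : ℂ) / D) by push_cast; ring]
  -- `G1 D α β` unfolds to `weightedIntegral (seriesSum (kummerCoeff (-α) (1 - β))) D β`.
  exact weightedIntegral_eigenvalue_equation hA.hasDerivAt_seriesSum hA.deriv.hasDerivAt_seriesSum
    hode hD.ne' hβ z hw

/-- for `D > 0`, `0 < α < β < 1`, every `z ∈ ℂ` and every `w > 0`,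
`−2 ∂²G₁/∂w∂z − (1 − z/D) ∂G₁/∂z = (α/D) G₁`. -/
theorem G1_eigenvalue_equation (D α β : ℝ) (hD : 0 < D) (hα : 0 < α) (hαβ : α < β)
    (hβ : β < 1) (z : ℂ) (w : ℝ) (hw : 0 < w) :
    -2 * deriv (fun w' : ℝ => deriv (fun z' : ℂ => G1 D α β z' w') z) w
        - (1 - z / (D : ℂ)) * deriv (fun z' : ℂ => G1 D α β z' w) z
      = ((α / D : ℝ) : ℂ) * G1 D α β z w :=
  G1_eigenvalue_equation_general D α β hD hβ z w hw
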